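/- arXiv:2504.15749 — 3 statements merged into one kernel-verified Lean document; each statement's English description precedes it below -/
import Mathlib

section
/- If f, g : [0,∞) → [0,∞) satisfy f(s) ≤ C⟨s⟩^{-3/2} and g(s) ≤ C⟨s⟩^{-3/2}, then their convolution satisfies ∫₀^t f(t-s) g(s) ds ≤ C' ⟨t⟩^{-3/2} for all t ≥ 0, for some constant C' depending only on C. -/
/-!
The weight `w(s) = ⟨s⟩^{-2p}` is decreasing on `[0, ∞)` and satisfies `w(t/2) ≤ 4^p w(t)`.
Split `[0, t]` at `t / 2`: on each half one factor has its argument in `[t/2, t]`, hence is at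
most `4^p w(t)`, and the other factor integrates to at most `∫_ℝ w`, which is finite since
`2p > 1` (here `p = 3/4`).
-/

open MeasureTheory intervalIntegral Set

theorem intervalIntegral.integral_mono_on_of_nonneg {f g : ℝ → ℝ} {a b : ℝ} (hab : a ≤ b)
    (hg : IntervalIntegrable g volume a b) (hf0 : ∀ x ∈ Ioc a b, 0 ≤ f x)
    (h : ∀ x ∈ Ioc a b, f x ≤ g x) :
    ∫ x in a..b, f x ≤ ∫ x in a..b, g x := by
  rw [integral_of_le hab, integral_of_le hab]
  exact integral_mono_of_nonneg (ae_restrict_of_forall_mem measurableSet_Ioc hf0) hg.1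
    (ae_restrict_of_forall_mem measurableSet_Ioc h)

noncomputable def decayWeight (p s : ℝ) : ℝ := (1 + s ^ 2) ^ (-p)

namespace decayWeight

variable {p : ℝ}

theorem nonneg (p s : ℝ) : 0 ≤ decayWeight p s :=
  Real.rpow_nonneg (by positivity) _

theorem continuous (p : ℝ) : Continuous (decayWeight p) :=
  continuous_const.add (continuous_pow 2) |>.rpow_const fun s =>
    Or.inl (by positivity : (0 : ℝ) < 1 + s ^ 2).ne'

theorem antitoneOn (hp : 0 ≤ p) : AntitoneOn (decayWeight p) (Ici 0) := by
  intro s hs u _ hsu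
  have : s ^ 2 ≤ u ^ 2 := pow_le_pow_left₀ hs hsu 2
  exact Real.rpow_le_rpow_of_nonpos (by positivity) (by linarith) (neg_nonpos.2 hp)

theorem half_le (hp : 0 ≤ p) (t : ℝ) : decayWeight p (t / 2) ≤ 4 ^ p * decayWeight p t := by
  have hle : (1 + t ^ 2) / 4 ≤ 1 + (t / 2) ^ 2 := by nlinarith
  calc decayWeight p (t / 2) ≤ ((1 + t ^ 2) / 4) ^ (-p) :=
        Real.rpow_le_rpow_of_nonpos (by positivity) hle (neg_nonpos.2 hp)
    _ = 4 ^ p * decayWeight p t := by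
        rw [Real.div_rpow (by positivity) (by norm_num), Real.rpow_neg (by norm_num : (0 : ℝ) ≤ 4),
          div_inv_eq_mul, mul_comm, decayWeight]

theorem integrable (hp : 1 / 2 < p) : Integrable (decayWeight p) := by
  have := integrable_rpow_neg_one_add_norm_sq (E := ℝ) (μ := volume) (r := 2 * p)
    (by rw [Module.finrank_self, Nat.cast_one]; linarith)
  convert this using 2 with s
  rw [decayWeight, Real.norm_eq_abs, sq_abs]
  ring_nf

theorem intervalIntegral_le_integral (hp : 1 / 2 < p) {T : ℝ} (hT : 0 ≤ T) :
    ∫ s in 0..T, decayWeight p s ≤ ∫ s, decayWeight p s := by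
  rw [integral_of_le hT]
  exact setIntegral_le_integral (integrable hp) (.of_forall (nonneg p))

theorem intervalIntegral_conv_le (hp : 1 / 2 < p) {t : ℝ} (ht : 0 ≤ t) :
    ∫ s in 0..t, decayWeight p (t - s) * decayWeight p s ≤
      2 * 4 ^ p * (∫ s, decayWeight p s) * decayWeight p t := by
  set w := decayWeight p
  have hp0 : 0 ≤ p := by linarith
  have hw : Continuous w := decayWeight.continuous p
  have hconv : Continuous fun s => w (t - s) * w s := (hw.comp (continuous_sub_left t)).mul hw
  have hsplit := integral_add_adjacent_intervals
    (hconv.intervalIntegrable (μ := volume) 0 (t / 2)) (hconv.intervalIntegrable (t / 2) t)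
  -- the substitution `s ↦ t - s` swaps the two halves
  have hsymm : ∫ s in t / 2..t, w (t - s) * w s = ∫ s in 0..t / 2, w (t - s) * w s := by
    have := integral_comp_sub_left (fun u => w u * w (t - u)) t (a := t / 2) (b := t)
    simp only [sub_sub_cancel, sub_self, sub_half] at this
    simpa only [mul_comm] using this
  have hfar : ∀ s ∈ Icc 0 (t / 2), w (t - s) ≤ 4 ^ p * w t := fun s hs =>
    (antitoneOn hp0 (mem_Ici.2 (by linarith)) (mem_Ici.2 (by linarith [hs.2]))
      (by linarith [hs.2])).trans (half_le hp0 t)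
  have hhalf : ∫ s in 0..t / 2, w (t - s) * w s ≤ 4 ^ p * w t * ∫ s, w s := by
    calc ∫ s in 0..t / 2, w (t - s) * w s ≤ ∫ s in 0..t / 2, 4 ^ p * w t * w s := by
          refine integral_mono_on (by linarith) (hconv.intervalIntegrable _ _)
            ((continuous_const.mul hw).intervalIntegrable _ _) fun s hs => ?_
          gcongr
          · exact nonneg p s
          · exact hfar s hs
      _ = 4 ^ p * w t * ∫ s in 0..t / 2, w s := integral_const_mul _ _
      _ ≤ 4 ^ p * w t * ∫ s, w s := by
          gcongr
          · exact mul_nonneg (by positivity) (nonneg p t)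
          · exact intervalIntegral_le_integral hp (by linarith)
  rw [← hsplit, hsymm]
  linarith

end decayWeight

theorem intervalIntegral_conv_le_of_le_decayWeight {p C : ℝ} (hp : 1 / 2 < p) {f g : ℝ → ℝ}
    (hf0 : ∀ s, 0 ≤ s → 0 ≤ f s) (hg0 : ∀ s, 0 ≤ s → 0 ≤ g s)
    (hf : ∀ s, 0 ≤ s → f s ≤ C * decayWeight p s) (hg : ∀ s, 0 ≤ s → g s ≤ C * decayWeight p s)
    {t : ℝ} (ht : 0 ≤ t) :
    ∫ s in 0..t, f (t - s) * g s ≤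
      C ^ 2 * (2 * 4 ^ p * ∫ s, decayWeight p s) * decayWeight p t := by
  have hw := decayWeight.continuous p
  have hconv : Continuous fun s => decayWeight p (t - s) * decayWeight p s :=
    (hw.comp (continuous_sub_left t)).mul hw
  calc ∫ s in 0..t, f (t - s) * g s
      ≤ ∫ s in 0..t, C ^ 2 * (decayWeight p (t - s) * decayWeight p s) := by
        refine integral_mono_on_of_nonneg ht ((continuous_const.mul hconv).intervalIntegrable _ _)
          (fun s hs => mul_nonneg (hf0 _ (by linarith [hs.2])) (hg0 _ hs.1.le)) fun s hs => ?_
        have hts : 0 ≤ t - s := by linarith [hs.2]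
        calc f (t - s) * g s ≤ (C * decayWeight p (t - s)) * (C * decayWeight p s) :=
              mul_le_mul (hf _ hts) (hg _ hs.1.le) (hg0 _ hs.1.le) ((hf0 _ hts).trans (hf _ hts))
          _ = C ^ 2 * (decayWeight p (t - s) * decayWeight p s) := by ring
    _ = C ^ 2 * ∫ s in 0..t, decayWeight p (t - s) * decayWeight p s := integral_const_mul _ _
    _ ≤ C ^ 2 * (2 * 4 ^ p * (∫ s, decayWeight p s) * decayWeight p t) :=
        mul_le_mul_of_nonneg_left (decayWeight.intervalIntegral_conv_le hp ht) (sq_nonneg C)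
    _ = _ := by ring

theorem convolution_decay_general (C : ℝ) :
    ∃ C' : ℝ, ∀ f g : ℝ → ℝ,
      (∀ s, 0 ≤ s → 0 ≤ f s) → (∀ s, 0 ≤ s → 0 ≤ g s) →
      (∀ s, 0 ≤ s → f s ≤ C * (1 + s ^ 2) ^ (-(3 : ℝ) / 4)) →
      (∀ s, 0 ≤ s → g s ≤ C * (1 + s ^ 2) ^ (-(3 : ℝ) / 4)) →
      ∀ t, 0 ≤ t →
        (∫ s in (0:ℝ)..t, f (t - s) * g s) ≤ C' * (1 + t ^ 2) ^ (-(3 : ℝ) / 4) := by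
  have hweight : ∀ s : ℝ, (1 + s ^ 2) ^ (-(3 : ℝ) / 4) = decayWeight (3 / 4) s := fun s => by
    rw [decayWeight, neg_div]
  refine ⟨C ^ 2 * (2 * 4 ^ (3 / 4 : ℝ) * ∫ s, decayWeight (3 / 4) s), ?_⟩
  simp only [hweight]
  intro f g hf0 hg0 hf hg t ht
  exact intervalIntegral_conv_le_of_le_decayWeight (by norm_num) hf0 hg0 hf hg ht

/-- If `f, g : [0,∞) → [0,∞)` satisfy `f(s) ≤ C⟨s⟩^{-3/2}` and `g(s) ≤ C⟨s⟩^{-3/2}`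
(`⟨s⟩ = √(1+s²)`), then `∫₀^t f(t-s) g(s) ds ≤ C' ⟨t⟩^{-3/2}` for all `t ≥ 0`, with a
constant `C'` depending only on `C`. -/
theorem convolution_decay (C : ℝ) (hC : 0 ≤ C) :
    ∃ C' : ℝ, ∀ f g : ℝ → ℝ,
      (∀ s, 0 ≤ s → 0 ≤ f s) → (∀ s, 0 ≤ s → 0 ≤ g s) →
      (∀ s, 0 ≤ s → f s ≤ C * (1 + s ^ 2) ^ (-(3 : ℝ) / 4)) →
      (∀ s, 0 ≤ s → g s ≤ C * (1 + s ^ 2) ^ (-(3 : ℝ) / 4)) →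
      ∀ t, 0 ≤ t →
        (∫ s in (0:ℝ)..t, f (t - s) * g s) ≤ C' * (1 + t ^ 2) ^ (-(3 : ℝ) / 4) :=
  convolution_decay_general C
end

section
/- If a measurable function r : [0,∞) → [0,∞) satisfies E|r(s)|² ≤ C⟨s⟩^{-1} (so (E|r(s)|²)^{1/2} ≤ C^{1/2}⟨s⟩^{-1/2}), then E|∫₀^t r(t-s) ⟨s⟩^{-3/2} ds|² ≤ C₁(1+t)^{-1} for all t ≥ 0. -/
/-!
Cauchy–Schwarz against the integrable weight `g(s) = ⟨s⟩^{-3/2}` gives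
`(∫₀ᵗ r(t-s) g(s) ds)² ≤ (∫₀ᵗ g) ∫₀ᵗ r(t-s)² g(s) ds`; taking expectations and swapping the
integrals (Fubini), it remains to show `∫₀ᵗ ⟨t-s⟩^{-1} ⟨s⟩^{-3/2} ds ≲ (1+t)^{-1}`. Split at
`s = t/2`: on `[0, t/2]` one has `⟨t-s⟩^{-1} ≲ (1+t)^{-1}` and `g` is integrable, on `[t/2, t]` one
has `g(s) ≲ (1+t)^{-3/2}` while `∫₀ᵗ ⟨s⟩^{-1} ds ≲ (1+t)^{1/2}`.
-/

open MeasureTheory Set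

theorem sq_integral_mul_le_integral_mul_integral_sq_mul {α : Type*} [MeasurableSpace α]
    {ν : Measure α} {f w : α → ℝ} (hf : AEStronglyMeasurable f ν) (hw₀ : 0 ≤ᵐ[ν] w)
    (hw : Integrable w ν) (hf₂w : Integrable (fun x => f x ^ 2 * w x) ν) :
    (∫ x, f x * w x ∂ν) ^ 2 ≤ (∫ x, w x ∂ν) * ∫ x, f x ^ 2 * w x ∂ν := by
  have hfw : Integrable (fun x => f x * w x) ν := by
    refine (hf₂w.add hw).mono' (hf.mul hw.aestronglyMeasurable) ?_
    filter_upwards [hw₀] with x (hx : 0 ≤ w x)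
    rw [Pi.add_apply, norm_mul, Real.norm_of_nonneg hx, Real.norm_eq_abs]
    nlinarith [mul_nonneg hx (sq_nonneg (|f x| - 1)), mul_nonneg (abs_nonneg (f x)) hx,
      sq_abs (f x)]
  -- the quadratic `c ↦ ∫ (c f + 1)² w` is nonnegative, so its discriminant is not positive
  have hquad : ∀ c : ℝ, 0 ≤ (∫ x, f x ^ 2 * w x ∂ν) * (c * c) + 2 * (∫ x, f x * w x ∂ν) * c
      + ∫ x, w x ∂ν := by
    intro c
    calc 0 ≤ ∫ x, (c * f x + 1) ^ 2 * w x ∂ν := integral_nonneg_of_ae <| by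
          filter_upwards [hw₀] with x (hx : 0 ≤ w x) using mul_nonneg (sq_nonneg _) hx
      _ = ∫ x, (c * c * (f x ^ 2 * w x) + 2 * c * (f x * w x) + w x) ∂ν :=
          integral_congr_ae (ae_of_all _ fun x => by ring)
      _ = _ := by
          rw [integral_add _ hw, integral_add (hf₂w.const_mul _) (hfw.const_mul _),
            integral_const_mul, integral_const_mul]
          · ring
          · exact (hf₂w.const_mul _).add (hfw.const_mul _)
  have := discrim_le_zero hquad
  rw [discrim] at this
  linarith

theorem integrable_prod_sq_mul_of_integral_sq_le {S Ω : Type*} [MeasurableSpace S]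
    [MeasurableSpace Ω] {ν : Measure S} {μ : Measure Ω} [SFinite μ] {F : S → Ω → ℝ} {w B : S → ℝ}
    (hF : AEStronglyMeasurable (Function.uncurry F) (ν.prod μ)) (hw : AEStronglyMeasurable w ν)
    (hw₀ : 0 ≤ᵐ[ν] w) (hF₂ : ∀ᵐ s ∂ν, Integrable (fun ω => F s ω ^ 2) μ)
    (hBw : Integrable (fun s => B s * w s) ν) (hFB : ∀ᵐ s ∂ν, ∫ ω, F s ω ^ 2 ∂μ ≤ B s) :
    Integrable (fun p : S × Ω => F p.1 p.2 ^ 2 * w p.1) (ν.prod μ) := by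
  have hm : AEStronglyMeasurable (fun p : S × Ω => F p.1 p.2 ^ 2 * w p.1) (ν.prod μ) :=
    (hF.pow 2).mul hw.comp_fst
  refine (integrable_prod_iff hm).2 ⟨?_, hBw.mono' hm.norm.integral_prod_right' ?_⟩
  · filter_upwards [hF₂] with s hs using hs.mul_const (w s)
  · filter_upwards [hw₀, hFB] with s (hws : 0 ≤ w s) hs
    calc ‖∫ ω, ‖F s ω ^ 2 * w s‖ ∂μ‖ = (∫ ω, F s ω ^ 2 ∂μ) * w s := by
          rw [Real.norm_of_nonneg (integral_nonneg fun _ => norm_nonneg _), ← integral_mul_const]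
          exact integral_congr_ae (ae_of_all _ fun ω => Real.norm_of_nonneg (by positivity))
      _ ≤ B s * w s := mul_le_mul_of_nonneg_right hs hws

theorem integral_sq_integral_mul_le {S Ω : Type*} [MeasurableSpace S] [MeasurableSpace Ω]
    {ν : Measure S} {μ : Measure Ω} [SFinite ν] [SFinite μ] {F : S → Ω → ℝ} {w B : S → ℝ}
    (hF : AEStronglyMeasurable (Function.uncurry F) (ν.prod μ)) (hw₀ : 0 ≤ᵐ[ν] w)
    (hw : Integrable w ν) (hF₂ : ∀ᵐ s ∂ν, Integrable (fun ω => F s ω ^ 2) μ)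
    (hBw : Integrable (fun s => B s * w s) ν) (hFB : ∀ᵐ s ∂ν, ∫ ω, F s ω ^ 2 ∂μ ≤ B s) :
    ∫ ω, (∫ s, F s ω * w s ∂ν) ^ 2 ∂μ ≤ (∫ s, w s ∂ν) * ∫ s, B s * w s ∂ν := by
  have hprod :=
    integrable_prod_sq_mul_of_integral_sq_le hF hw.aestronglyMeasurable hw₀ hF₂ hBw hFB
  have hCS : ∀ᵐ ω ∂μ,
      (∫ s, F s ω * w s ∂ν) ^ 2 ≤ (∫ s, w s ∂ν) * ∫ s, F s ω ^ 2 * w s ∂ν := by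
    filter_upwards [hF.prodMk_right, hprod.prod_left_ae] with ω hFω hF₂ω
    exact sq_integral_mul_le_integral_mul_integral_sq_mul hFω hw₀ hw hF₂ω
  have hw_int_nonneg : 0 ≤ ∫ s, w s ∂ν := integral_nonneg_of_ae hw₀
  calc ∫ ω, (∫ s, F s ω * w s ∂ν) ^ 2 ∂μ
      ≤ ∫ ω, (∫ s, w s ∂ν) * ∫ s, F s ω ^ 2 * w s ∂ν ∂μ :=
        integral_mono_of_nonneg (ae_of_all _ fun _ => sq_nonneg _)
          (hprod.integral_prod_right.const_mul _) hCS
    _ = (∫ s, w s ∂ν) * ∫ s, ∫ ω, F s ω ^ 2 * w s ∂μ ∂ν := by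
        rw [integral_const_mul, integral_integral_swap (f := fun s ω => F s ω ^ 2 * w s) hprod]
    _ ≤ (∫ s, w s ∂ν) * ∫ s, B s * w s ∂ν := by
        refine mul_le_mul_of_nonneg_left (integral_mono_ae hprod.integral_prod_left hBw ?_)
          hw_int_nonneg
        filter_upwards [hw₀, hFB] with s (hws : 0 ≤ w s) hs
        rw [integral_mul_const]
        exact mul_le_mul_of_nonneg_right hs hws

theorem one_add_sq_rpow_neg_le {a c x y : ℝ} (ha : 0 ≤ a) (hy : 0 < 1 + y) (hc : 0 < c)
    (h : (1 + y) ^ 2 ≤ c * (1 + x ^ 2)) :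
    (1 + x ^ 2) ^ (-a) ≤ c ^ a * (1 + y) ^ (-(2 * a)) := by
  have hcomp : (c * (1 + x ^ 2)) ^ (-a) ≤ ((1 + y) ^ 2) ^ (-a) :=
    Real.rpow_le_rpow_of_nonpos (by positivity) h (neg_nonpos.2 ha)
  have hsq : ((1 + y) ^ 2) ^ (-a) = (1 + y) ^ (-(2 * a)) := by
    rw [← Real.rpow_natCast, ← Real.rpow_mul hy.le]
    push_cast; ring_nf
  rw [Real.mul_rpow hc.le (by positivity), Real.rpow_neg hc.le, hsq] at hcomp
  calc (1 + x ^ 2) ^ (-a) = c ^ a * ((c ^ a)⁻¹ * (1 + x ^ 2) ^ (-a)) := by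
        field_simp
    _ ≤ c ^ a * (1 + y) ^ (-(2 * a)) := by gcongr

theorem antitoneOn_one_add_sq_rpow_neg {a : ℝ} (ha : 0 ≤ a) :
    AntitoneOn (fun x : ℝ => (1 + x ^ 2) ^ (-a)) (Ici 0) := by
  intro x hx y _ hxy
  exact Real.rpow_le_rpow_of_nonpos (by positivity) (by gcongr) (neg_nonpos.2 ha)

theorem continuous_one_add_sq_rpow (a : ℝ) : Continuous fun x : ℝ => (1 + x ^ 2) ^ a :=
  (continuous_const.add (continuous_pow 2)).rpow_const fun x =>
    Or.inl (by positivity : (0 : ℝ) < 1 + x ^ 2).ne'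

theorem integral_one_add_rpow_neg {a t : ℝ} (ha : a ≠ 1) (ht : -1 < t) :
    ∫ s in (0 : ℝ)..t, (1 + s) ^ (-a) = ((1 + t) ^ (1 - a) - 1) / (1 - a) := by
  have h0 : (0 : ℝ) ∉ uIcc 1 (1 + t) := by
    rw [mem_uIcc]; rintro (⟨h, -⟩ | ⟨h, -⟩) <;> linarith
  rw [intervalIntegral.integral_comp_add_left (fun s => s ^ (-a)), add_zero,
    integral_rpow (Or.inr ⟨fun h => ha (by linarith), h0⟩), Real.one_rpow]
  ring_nf

theorem integral_one_add_rpow_neg_le_of_one_lt {a t : ℝ} (ha : 1 < a) (ht : 0 ≤ t) :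
    ∫ s in (0 : ℝ)..t, (1 + s) ^ (-a) ≤ (a - 1)⁻¹ := by
  rw [integral_one_add_rpow_neg ha.ne' (by linarith), div_le_iff_of_neg (by linarith),
    show (a - 1)⁻¹ * (1 - a) = -1 by
      rw [← neg_sub a 1, mul_neg, inv_mul_cancel₀ (by linarith)]]
  linarith [Real.rpow_nonneg (by linarith : (0 : ℝ) ≤ 1 + t) (1 - a)]

theorem integral_one_add_rpow_neg_le_of_lt_one {a t : ℝ} (ha : a < 1) (ht : 0 ≤ t) :
    ∫ s in (0 : ℝ)..t, (1 + s) ^ (-a) ≤ (1 + t) ^ (1 - a) / (1 - a) := by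
  rw [integral_one_add_rpow_neg ha.ne (by linarith)]
  gcongr
  linarith

theorem integral_one_add_sq_rpow_neg_le {a t : ℝ} (ha : 0 ≤ a) (ht : 0 ≤ t) :
    ∫ s in (0 : ℝ)..t, (1 + s ^ 2) ^ (-a) ≤ 2 ^ a * ∫ s in (0 : ℝ)..t, (1 + s) ^ (-(2 * a)) := by
  have hrpow : IntervalIntegrable (fun s : ℝ => (1 + s) ^ (-(2 * a))) volume 0 t := by
    refine ContinuousOn.intervalIntegrable ?_
    refine ContinuousOn.rpow_const (f := fun s => 1 + s) (by fun_prop) fun s hs => Or.inl ?_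
    rw [uIcc_of_le ht] at hs
    linarith [hs.1]
  rw [← intervalIntegral.integral_const_mul]
  refine intervalIntegral.integral_mono_on ht
    ((continuous_one_add_sq_rpow _).intervalIntegrable _ _) (hrpow.const_mul _) fun s hs => ?_
  exact one_add_sq_rpow_neg_le ha (by linarith [hs.1]) two_pos (by nlinarith [sq_nonneg (s - 1)])

theorem integral_one_add_sq_rpow_neg_le_of_half_lt {a t : ℝ} (ha : 1 / 2 < a) (ht : 0 ≤ t) :
    ∫ s in (0 : ℝ)..t, (1 + s ^ 2) ^ (-a) ≤ 2 ^ a * (2 * a - 1)⁻¹ :=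
  (integral_one_add_sq_rpow_neg_le (by linarith) ht).trans <| by
    gcongr
    exact integral_one_add_rpow_neg_le_of_one_lt (by linarith) ht

theorem integral_one_add_sq_rpow_neg_le_of_lt_half {a t : ℝ} (ha₀ : 0 ≤ a) (ha : a < 1 / 2)
    (ht : 0 ≤ t) :
    ∫ s in (0 : ℝ)..t, (1 + s ^ 2) ^ (-a) ≤ 2 ^ a * ((1 + t) ^ (1 - 2 * a) / (1 - 2 * a)) :=
  (integral_one_add_sq_rpow_neg_le ha₀ ht).trans <| by
    gcongr
    exact integral_one_add_rpow_neg_le_of_lt_one (by linarith) ht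

theorem integral_one_add_sq_rpow_neg_half_le {t : ℝ} (ht : 0 ≤ t) :
    ∫ s in (0 : ℝ)..t, (1 + s ^ 2) ^ (-(1 / 2 : ℝ))
      ≤ 2 ^ (1 / 4 : ℝ) * 2 * (1 + t) ^ (1 / 2 : ℝ) := by
  -- the borderline exponent `1/2` would give `log (1 + t)`; `1/4` gives the growth needed
  calc ∫ s in (0 : ℝ)..t, (1 + s ^ 2) ^ (-(1 / 2 : ℝ))
      ≤ ∫ s in (0 : ℝ)..t, (1 + s ^ 2) ^ (-(1 / 4 : ℝ)) :=
        intervalIntegral.integral_mono_on ht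
          ((continuous_one_add_sq_rpow _).intervalIntegrable _ _)
          ((continuous_one_add_sq_rpow _).intervalIntegrable _ _) fun s _ =>
          Real.rpow_le_rpow_of_exponent_le (by nlinarith [sq_nonneg s]) (by norm_num)
    _ ≤ 2 ^ (1 / 4 : ℝ) * ((1 + t) ^ (1 - 2 * (1 / 4 : ℝ)) / (1 - 2 * (1 / 4))) :=
        integral_one_add_sq_rpow_neg_le_of_lt_half (by norm_num) (by norm_num) ht
    _ = 2 ^ (1 / 4 : ℝ) * 2 * (1 + t) ^ (1 / 2 : ℝ) := by norm_num; ring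

theorem integral_comp_sub_mul_le_of_antitoneOn {k g : ℝ → ℝ} {t : ℝ} (ht : 0 ≤ t)
    (hk : AntitoneOn k (Ici 0)) (hg : AntitoneOn g (Ici 0)) (hk₀ : ∀ x, 0 ≤ x → 0 ≤ k x)
    (hg₀ : ∀ x, 0 ≤ x → 0 ≤ g x) (hkc : Continuous k) (hgc : Continuous g) :
    ∫ s in (0 : ℝ)..t, k (t - s) * g s
      ≤ k (t / 2) * (∫ s in (0 : ℝ)..t, g s) + g (t / 2) * ∫ s in (0 : ℝ)..t, k s := by
  have hkt : Continuous fun s => k (t - s) := hkc.comp (continuous_const.sub continuous_id)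
  -- on `[0, t/2]` the first factor is at most `k (t/2)`, on `[t/2, t]` the second one `g (t/2)`
  have hsplit : ∀ s ∈ Icc 0 t, k (t - s) * g s ≤ k (t / 2) * g s + g (t / 2) * k (t - s) := by
    rintro s ⟨hs₀, hst⟩
    have hks := hk₀ (t - s) (by linarith)
    have hgs := hg₀ s hs₀
    rcases le_total s (t / 2) with hs | hs
    · have := hk (show (0 : ℝ) ≤ t / 2 by linarith) (show (0 : ℝ) ≤ t - s by linarith)
        (by linarith)
      nlinarith [hg₀ (t / 2) (by linarith)]
    · have := hg (show (0 : ℝ) ≤ t / 2 by linarith) hs₀ hs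
      nlinarith [hk₀ (t / 2) (by linarith)]
  calc ∫ s in (0 : ℝ)..t, k (t - s) * g s
      ≤ ∫ s in (0 : ℝ)..t, (k (t / 2) * g s + g (t / 2) * k (t - s)) :=
        intervalIntegral.integral_mono_on ht ((hkt.mul hgc).intervalIntegrable _ _)
          (((continuous_const.mul hgc).add (continuous_const.mul hkt)).intervalIntegrable _ _)
          hsplit
    _ = k (t / 2) * (∫ s in (0 : ℝ)..t, g s) + g (t / 2) * ∫ s in (0 : ℝ)..t, k s := by
        rw [intervalIntegral.integral_add ((hgc.intervalIntegrable 0 t).const_mul _)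
          ((hkt.intervalIntegrable 0 t).const_mul _),
          intervalIntegral.integral_const_mul, intervalIntegral.integral_const_mul,
          intervalIntegral.integral_comp_sub_left k t, sub_self, sub_zero]

theorem exists_integral_one_add_sq_rpow_conv_le :
    ∃ K : ℝ, ∀ t : ℝ, 0 ≤ t →
      ∫ s in (0 : ℝ)..t, (1 + (t - s) ^ 2) ^ (-(1 / 2 : ℝ)) * (1 + s ^ 2) ^ (-(3 / 4 : ℝ))
        ≤ K * (1 + t)⁻¹ := by
  refine ⟨8 ^ (1 / 2 : ℝ) * (2 ^ (3 / 4 : ℝ) * 2) + 8 ^ (3 / 4 : ℝ) * (2 ^ (1 / 4 : ℝ) * 2),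
    fun t ht => ?_⟩
  have ht₁ : 0 < 1 + t := by linarith
  have hsq : (1 + t) ^ 2 ≤ 8 * (1 + (t / 2) ^ 2) := by nlinarith [sq_nonneg (t - 2)]
  have hk_half := one_add_sq_rpow_neg_le (a := 1 / 2) (by norm_num) ht₁ (by norm_num) hsq
  have hg_half := one_add_sq_rpow_neg_le (a := 3 / 4) (by norm_num) ht₁ (by norm_num) hsq
  have hg_int := integral_one_add_sq_rpow_neg_le_of_half_lt (a := 3 / 4) (by norm_num) ht
  have hk_int := integral_one_add_sq_rpow_neg_half_le ht
  have hg_int₀ : 0 ≤ ∫ s in (0 : ℝ)..t, (1 + s ^ 2) ^ (-(3 / 4 : ℝ)) :=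
    intervalIntegral.integral_nonneg ht fun s _ => by positivity
  have hk_int₀ : 0 ≤ ∫ s in (0 : ℝ)..t, (1 + s ^ 2) ^ (-(1 / 2 : ℝ)) :=
    intervalIntegral.integral_nonneg ht fun s _ => by positivity
  have hinv : (1 + t) ^ (-(2 * (1 / 2 : ℝ))) = (1 + t)⁻¹ := by norm_num [Real.rpow_neg_one]
  have hpow : (1 + t) ^ (-(2 * (3 / 4 : ℝ))) * (1 + t) ^ (1 / 2 : ℝ) = (1 + t)⁻¹ := by
    rw [← Real.rpow_add ht₁, ← Real.rpow_neg_one]; norm_num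
  calc ∫ s in (0 : ℝ)..t, (1 + (t - s) ^ 2) ^ (-(1 / 2 : ℝ)) * (1 + s ^ 2) ^ (-(3 / 4 : ℝ))
      ≤ (1 + (t / 2) ^ 2) ^ (-(1 / 2 : ℝ)) * (∫ s in (0 : ℝ)..t, (1 + s ^ 2) ^ (-(3 / 4 : ℝ)))
        + (1 + (t / 2) ^ 2) ^ (-(3 / 4 : ℝ)) * ∫ s in (0 : ℝ)..t, (1 + s ^ 2) ^ (-(1 / 2 : ℝ)) :=
        integral_comp_sub_mul_le_of_antitoneOn ht (antitoneOn_one_add_sq_rpow_neg (by norm_num))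
          (antitoneOn_one_add_sq_rpow_neg (by norm_num)) (fun x _ => by positivity)
          (fun x _ => by positivity) (continuous_one_add_sq_rpow _) (continuous_one_add_sq_rpow _)
    _ ≤ 8 ^ (1 / 2 : ℝ) * (1 + t) ^ (-(2 * (1 / 2 : ℝ))) * (2 ^ (3 / 4 : ℝ) * (2 * (3 / 4) - 1)⁻¹)
        + 8 ^ (3 / 4 : ℝ) * (1 + t) ^ (-(2 * (3 / 4 : ℝ)))
          * (2 ^ (1 / 4 : ℝ) * 2 * (1 + t) ^ (1 / 2 : ℝ)) := by
        gcongr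
    _ = _ := by
        rw [hinv]
        linear_combination (8 ^ (3 / 4 : ℝ) * 2 ^ (1 / 4 : ℝ) * 2) * hpow

/-- If random variables `r(s)` satisfy `E|r(s)|² ≤ C ⟨s⟩⁻¹` (`⟨s⟩ = √(1+s²)`), then
`E |∫₀^t r(t-s) ⟨s⟩^{-3/2} ds|² ≤ C₁ (1+t)⁻¹` for all `t ≥ 0`. -/
theorem second_moment_convolution_decay
    {Ω : Type*} [MeasurableSpace Ω] (μ : Measure Ω) [IsProbabilityMeasure μ]
    (r : ℝ → Ω → ℝ) (hmeas : Measurable (Function.uncurry r))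
    (hint : ∀ s, Integrable (fun ω => (r s ω) ^ 2) μ)
    (C : ℝ)
    (hr : ∀ s, 0 ≤ s → ∫ ω, (r s ω) ^ 2 ∂μ ≤ C * ((1 + s ^ 2) ^ (-(1 : ℝ) / 2))) :
    ∃ C₁ : ℝ, ∀ t, 0 ≤ t →
      ∫ ω, (∫ s in (0:ℝ)..t, r (t - s) ω * (1 + s ^ 2) ^ (-(3 : ℝ) / 4)) ^ 2 ∂μ
        ≤ C₁ * (1 + t)⁻¹ := by
  obtain ⟨K, hK⟩ := exists_integral_one_add_sq_rpow_conv_le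
  simp only [neg_div] at hr ⊢
  have hC : 0 ≤ C := by
    simpa using (integral_nonneg fun ω => sq_nonneg (r 0 ω)).trans (hr 0 le_rfl)
  refine ⟨2 ^ (3 / 4 : ℝ) * (2 * (3 / 4) - 1)⁻¹ * (C * K), fun t ht => ?_⟩
  have hF : AEStronglyMeasurable (Function.uncurry fun s ω => r (t - s) ω)
      ((volume.restrict (Ioc 0 t)).prod μ) :=
    (hmeas.comp ((measurable_const.sub measurable_fst).prodMk measurable_snd)).aestronglyMeasurable
  have hFB : ∀ᵐ s ∂volume.restrict (Ioc 0 t),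
      ∫ ω, r (t - s) ω ^ 2 ∂μ ≤ C * (1 + (t - s) ^ 2) ^ (-(1 / 2 : ℝ)) :=
    (ae_restrict_iff' measurableSet_Ioc).2 (ae_of_all _ fun s hs => hr _ (by linarith [hs.2]))
  have hk : Continuous fun s => (1 + (t - s) ^ 2) ^ (-(1 / 2 : ℝ)) :=
    (continuous_one_add_sq_rpow _).comp (continuous_const.sub continuous_id)
  have hg : Continuous fun s : ℝ => (1 + s ^ 2) ^ (-(3 / 4 : ℝ)) := continuous_one_add_sq_rpow _
  have hCS := integral_sq_integral_mul_le (w := fun s => (1 + s ^ 2) ^ (-(3 / 4 : ℝ)))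
    (B := fun s => C * (1 + (t - s) ^ 2) ^ (-(1 / 2 : ℝ))) hF (ae_of_all _ fun s => by positivity)
    hg.integrableOn_Ioc (ae_of_all _ fun s => hint (t - s))
    (Continuous.integrableOn_Ioc (by fun_prop)) hFB
  simp only [← intervalIntegral.integral_of_le ht, mul_assoc,
    intervalIntegral.integral_const_mul] at hCS
  calc _ ≤ _ := hCS
    _ ≤ 2 ^ (3 / 4 : ℝ) * (2 * (3 / 4) - 1)⁻¹ * (C * (K * (1 + t)⁻¹)) := by
        gcongr
        · exact mul_nonneg hC (intervalIntegral.integral_nonneg ht fun s _ => by positivity)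
        · exact integral_one_add_sq_rpow_neg_le_of_half_lt (by norm_num) ht
        · exact hK t ht
    _ = _ := by ring
end

section
/- Sokhotski–Plemelj type limit: let g : [a, ∞) → ℝ be continuous and integrable with a < 0. Then lim_{ε→0⁺} Im ∫_a^∞ g(y)/(y + iε) dy = -π g(0). -/
/-!
The imaginary part of `g y / (y + iε)` is `-g y` times the Poisson kernel `ε / (y² + ε²)`,
which is `π` times the Cauchy density rescaled by `ε`. Extending `g` by zero outside `[a, ∞)`
keeps it continuous at `0` because `a < 0`, so the standard approximation-of-identity theorem for
rescalings of an integrable density with integral one gives `∫ ε / (y² + ε²) g y dy → π g 0`.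
-/

open MeasureTheory Filter Set Real Topology Bornology ProbabilityTheory Complex

lemma tendsto_norm_mul_cauchyPDFReal_cobounded :
    Tendsto (fun x : ℝ => ‖x‖ * cauchyPDFReal 0 1 x) (cobounded ℝ) (𝓝 0) := by
  have hinv : Tendsto (fun x : ℝ => π⁻¹ * ‖x‖⁻¹) (cobounded ℝ) (𝓝 0) := by
    simpa using
      (tendsto_inv_atTop_zero.comp (tendsto_norm_cobounded_atTop (E := ℝ))).const_mul π⁻¹
  refine squeeze_zero (fun x => mul_nonneg (norm_nonneg x) (cauchyPDF_pos 0 one_ne_zero x).le)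
    (fun x => ?_) hinv
  rcases eq_or_ne x 0 with rfl | hx
  · simp
  have : 0 < |x| := abs_pos.2 hx
  simp only [cauchyPDFReal_def, NNReal.coe_one, sub_zero, one_pow, mul_one, Real.norm_eq_abs]
  rw [← sq_abs x]
  field_simp
  nlinarith

lemma div_sq_add_sq_eq_pi_mul_cauchyPDFReal {ε : ℝ} (hε : 0 < ε) (y : ℝ) :
    ε / (y ^ 2 + ε ^ 2) = π * (ε⁻¹ * cauchyPDFReal 0 1 (ε⁻¹ * y)) := by
  simp only [cauchyPDFReal_def, NNReal.coe_one, sub_zero, one_pow, mul_one]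
  field_simp

section PoissonKernel

variable {E : Type*} [NormedAddCommGroup E] [NormedSpace ℝ E] [CompleteSpace E]

theorem tendsto_integral_div_sq_add_sq_smul {g : ℝ → E} (hg : Integrable g)
    (hg0 : ContinuousAt g 0) :
    Tendsto (fun ε : ℝ => ∫ y, (ε / (y ^ 2 + ε ^ 2)) • g y) (𝓝[>] 0) (𝓝 (π • g 0)) := by
  have hcauchy := (tendsto_integral_comp_smul_smul_of_integrable (μ := volume)
    (fun x => (cauchyPDF_pos 0 one_ne_zero x).le) (integral_cauchyPDFReal_eq_one 0 one_ne_zero)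
    (by simpa using tendsto_norm_mul_cauchyPDFReal_cobounded) hg hg0).comp
    tendsto_inv_nhdsGT_zero
  refine (hcauchy.const_smul π).congr' ?_
  filter_upwards [self_mem_nhdsWithin] with ε (hε : 0 < ε)
  simp only [Function.comp_apply, Module.finrank_self, pow_one, smul_eq_mul,
    div_sq_add_sq_eq_pi_mul_cauchyPDFReal hε, ← integral_smul, mul_smul]

theorem tendsto_setIntegral_div_sq_add_sq_smul {g : ℝ → E} {s : Set ℝ} (hs : MeasurableSet s)
    (hs0 : s ∈ 𝓝 0) (hg : IntegrableOn g s) (hg0 : ContinuousAt g 0) :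
    Tendsto (fun ε : ℝ => ∫ y in s, (ε / (y ^ 2 + ε ^ 2)) • g y) (𝓝[>] 0) (𝓝 (π • g 0)) := by
  have h := tendsto_integral_div_sq_add_sq_smul ((integrable_indicator_iff hs).2 hg)
    (hg0.congr (by filter_upwards [hs0] with y hy using (indicator_of_mem hy g).symm))
  rw [indicator_of_mem (mem_of_mem_nhds hs0)] at h
  refine h.congr fun ε => ?_
  simp_rw [← integral_indicator hs, indicator_smul_apply]

end PoissonKernel

lemma im_ofReal_div_ofReal_add_mul_I (r y ε : ℝ) :
    ((r : ℂ) / (y + ε * I)).im = -(ε / (y ^ 2 + ε ^ 2) * r) := by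
  rw [div_im, normSq_add_mul_I]
  simp only [ofReal_im, add_re, ofReal_re, mul_re, I_re, mul_zero, I_im, mul_one, sub_self,
    add_zero, zero_mul, zero_div, add_im, mul_im, zero_add, zero_sub, neg_inj]
  ring

lemma norm_inv_ofReal_add_mul_I_le (y : ℝ) {ε : ℝ} (hε : ε ≠ 0) :
    ‖((y : ℂ) + ε * I)⁻¹‖ ≤ |ε|⁻¹ := by
  rw [norm_inv]
  refine inv_anti₀ (abs_pos.2 hε) ?_
  simpa using abs_im_le_norm ((y : ℂ) + ε * I)

lemma MeasureTheory.Integrable.ofReal_div_ofReal_add_mul_I {μ : Measure ℝ} {g : ℝ → ℝ}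
    (hg : Integrable g μ) {ε : ℝ} (hε : ε ≠ 0) :
    Integrable (fun y => (g y : ℂ) / (y + ε * I)) μ := by
  simp_rw [div_eq_mul_inv]
  exact hg.ofReal.mul_bdd (by fun_prop)
    (Eventually.of_forall fun y => norm_inv_ofReal_add_mul_I_le y hε)

lemma im_integral_ofReal_div_ofReal_add_mul_I {μ : Measure ℝ} {g : ℝ → ℝ}
    (hg : Integrable g μ) {ε : ℝ} (hε : ε ≠ 0) :
    (∫ y, (g y : ℂ) / (y + ε * I) ∂μ).im = -∫ y, ε / (y ^ 2 + ε ^ 2) * g y ∂μ := by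
  have h := integral_im (hg.ofReal_div_ofReal_add_mul_I hε)
  simp only [RCLike.im_to_complex, im_ofReal_div_ofReal_add_mul_I, integral_neg] at h
  exact h.symm

/-- Sokhotski–Plemelj type limit: for `g : [a,∞) → ℝ` continuous and integrable with
`a < 0`, `lim_{ε→0⁺} Im ∫_a^∞ g(y)/(y + iε) dy = −π g(0)`. -/
theorem sokhotski_plemelj (a : ℝ) (ha : a < 0) (g : ℝ → ℝ)
    (hcont : ContinuousOn g (Set.Ici a)) (hint : IntegrableOn g (Set.Ici a)) :
    Tendsto (fun ε : ℝ =>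
        (∫ y in Set.Ici a, (g y : ℂ) / (y + ε * Complex.I)).im)
      (nhdsWithin 0 (Set.Ioi 0)) (nhds (-Real.pi * g 0)) := by
  have hmem : Set.Ici a ∈ 𝓝 (0 : ℝ) := Ici_mem_nhds ha
  have hlim := (tendsto_setIntegral_div_sq_add_sq_smul measurableSet_Ici hmem hint
    (hcont.continuousAt hmem)).neg
  simp only [smul_eq_mul, ← neg_mul] at hlim
  refine hlim.congr' ?_
  filter_upwards [self_mem_nhdsWithin] with ε (hε : 0 < ε)
  rw [im_integral_ofReal_div_ofReal_add_mul_I hint hε.ne']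
end
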